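/- Let F be a linearly ordered field, A and B magnitudes of F, and a, b ∈ F. Then the set M = a • B + b • A + A * B (Minkowski operations) is a magnitude of F (an order-convex additive subgroup), and consequently the product of the cosets a + A and b + B, defined as {a·b} + a • B + b • A + A * B, is itself a coset, namely a·b + M. -/

import Mathlib

open Pointwise

/-- A *magnitude* of a linearly ordered field `F` is an order-convex additive subgroup of `F`,
given as a set: it contains `0`, is closed under addition and negation, and is order-convex. -/
def IsMagnitude {F : Type*} [Field F] [LinearOrder F] [IsStrictOrderedRing F] (A : Set F) : Prop :=
  (0 : F) ∈ A ∧ (∀ x ∈ A, ∀ y ∈ A, x + y ∈ A) ∧ (∀ x ∈ A, -x ∈ A) ∧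
    (∀ x ∈ A, ∀ y ∈ A, ∀ z : F, x ≤ z → z ≤ y → z ∈ A)

/-- Order relation on subsets of `F`: `S ≤ T` iff every element of `S` is below some element of `T`. -/
def SetLE {F : Type*} [Field F] [LinearOrder F] [IsStrictOrderedRing F] (S T : Set F) : Prop :=
  ∀ x ∈ S, ∃ y ∈ T, x ≤ y

/-!
A magnitude is exactly a set containing `0`, closed under addition, and closed downwards in
absolute value. In this form each piece of `a • B + b • A + A * B` is easily checked: an element
dominated in absolute value by `c * x` is itself of the form `c * w` with `|w| ≤ |x|`. The sum of
two magnitudes is a magnitude because magnitudes are totally ordered by inclusion, so the sum is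
just the larger one.
-/

section

variable {F : Type*} [Field F] [LinearOrder F] [IsStrictOrderedRing F]

theorem exists_mul_eq_of_abs_le_abs_mul {c x z : F} (h : |z| ≤ |c * x|) :
    ∃ w, |w| ≤ |x| ∧ c * w = z := by
  rcases eq_or_ne c 0 with rfl | hc
  · exact ⟨0, by simp, by simpa [eq_comm] using h⟩
  · refine ⟨z / c, ?_, mul_div_cancel₀ z hc⟩
    rwa [abs_div, div_le_iff₀ (abs_pos.mpr hc), mul_comm, ← abs_mul]

namespace IsMagnitude

variable {A B : Set F}

theorem zero_mem (hA : IsMagnitude A) : (0 : F) ∈ A := hA.1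

theorem add_mem (hA : IsMagnitude A) {x y : F} (hx : x ∈ A) (hy : y ∈ A) : x + y ∈ A :=
  hA.2.1 x hx y hy

theorem abs_mem (hA : IsMagnitude A) {x : F} (hx : x ∈ A) : |x| ∈ A := by
  rcases abs_choice x with h | h <;> rw [h]
  · exact hx
  · exact hA.2.2.1 x hx

theorem mem_of_abs_le (hA : IsMagnitude A) {x z : F} (hx : x ∈ A) (h : |z| ≤ |x|) : z ∈ A :=
  hA.2.2.2 _ (hA.2.2.1 _ (hA.abs_mem hx)) _ (hA.abs_mem hx) z (abs_le.mp h).1 (abs_le.mp h).2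

theorem of_abs_le (h0 : (0 : F) ∈ A) (hadd : ∀ x ∈ A, ∀ y ∈ A, x + y ∈ A)
    (habs : ∀ x ∈ A, ∀ z : F, |z| ≤ |x| → z ∈ A) : IsMagnitude A := by
  refine ⟨h0, hadd, fun x hx => habs x hx _ (abs_neg x).le, fun x hx y hy z hxz hzy => ?_⟩
  have hz := abs_le_max_abs_abs hxz hzy
  rcases max_choice |x| |y| with h | h <;> rw [h] at hz
  · exact habs x hx z hz
  · exact habs y hy z hz

theorem subset_total (hA : IsMagnitude A) (hB : IsMagnitude B) : A ⊆ B ∨ B ⊆ A := by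
  refine or_iff_not_imp_left.mpr fun hAB t ht => ?_
  obtain ⟨s, hsA, hsB⟩ := Set.not_subset.mp hAB
  rcases le_total |t| |s| with hle | hle
  · exact hA.mem_of_abs_le hsA hle
  · exact absurd (hB.mem_of_abs_le ht hle) hsB

theorem add_eq_of_subset (hB : IsMagnitude B) (h0 : (0 : F) ∈ A) (hAB : A ⊆ B) : A + B = B := by
  refine Set.Subset.antisymm ?_ fun y hy => ⟨0, h0, y, hy, zero_add y⟩
  rintro _ ⟨x, hx, y, hy, rfl⟩
  exact hB.add_mem (hAB hx) hy

theorem add (hA : IsMagnitude A) (hB : IsMagnitude B) : IsMagnitude (A + B) := by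
  rcases hA.subset_total hB with h | h
  · rwa [hB.add_eq_of_subset hA.zero_mem h]
  · rwa [add_comm, hA.add_eq_of_subset hB.zero_mem h]

theorem smul (hB : IsMagnitude B) (a : F) : IsMagnitude (a • B) := by
  refine of_abs_le ⟨0, hB.zero_mem, mul_zero a⟩ ?_ ?_
  · rintro _ ⟨x, hx, rfl⟩ _ ⟨y, hy, rfl⟩
    exact ⟨x + y, hB.add_mem hx hy, smul_add a x y⟩
  · rintro _ ⟨x, hx, rfl⟩ z h
    obtain ⟨w, hw, rfl⟩ := exists_mul_eq_of_abs_le_abs_mul h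
    exact ⟨w, hB.mem_of_abs_le hx hw, rfl⟩

theorem mem_mul_of_abs_le (hA : IsMagnitude A) {x y z : F} (hx : x ∈ A) (hy : y ∈ B)
    (h : |z| ≤ |x * y|) : z ∈ A * B := by
  rw [mul_comm] at h
  obtain ⟨w, hw, rfl⟩ := exists_mul_eq_of_abs_le_abs_mul h
  exact ⟨w, hA.mem_of_abs_le hx hw, y, hy, mul_comm w y⟩

theorem mul (hA : IsMagnitude A) (hB : IsMagnitude B) : IsMagnitude (A * B) := by
  refine of_abs_le ⟨0, hA.zero_mem, 0, hB.zero_mem, mul_zero 0⟩ ?_ ?_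
  · rintro _ ⟨x₁, hx₁, y₁, hy₁, rfl⟩ _ ⟨x₂, hx₂, y₂, hy₂, rfl⟩
    refine hA.mem_mul_of_abs_le (hA.add_mem (hA.abs_mem hx₁) (hA.abs_mem hx₂))
      (hB.add_mem (hB.abs_mem hy₁) (hB.abs_mem hy₂)) ?_
    rw [abs_mul, abs_of_nonneg (by positivity : (0 : F) ≤ |x₁| + |x₂|),
      abs_of_nonneg (by positivity : (0 : F) ≤ |y₁| + |y₂|)]
    calc |x₁ * y₁ + x₂ * y₂| ≤ |x₁| * |y₁| + |x₂| * |y₂| := by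
          simpa only [abs_mul] using abs_add_le (x₁ * y₁) (x₂ * y₂)
      _ ≤ (|x₁| + |x₂|) * (|y₁| + |y₂|) := by
          nlinarith [mul_nonneg (abs_nonneg x₁) (abs_nonneg y₂),
            mul_nonneg (abs_nonneg x₂) (abs_nonneg y₁)]
  · rintro _ ⟨x, hx, y, hy, rfl⟩ z h
    exact hA.mem_mul_of_abs_le hx hy h

end IsMagnitude

end

theorem coset_product_is_coset {F : Type*} [Field F] [LinearOrder F] [IsStrictOrderedRing F]
    (A B : Set F) (hA : IsMagnitude A) (hB : IsMagnitude B) (a b : F) :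
    IsMagnitude (a • B + b • A + A * B) ∧
      {a * b} + a • B + b • A + A * B = {a * b} + (a • B + b • A + A * B) :=
  ⟨((hB.smul a).add (hA.smul b)).add (hA.mul hB), by simp only [add_assoc]⟩
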